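/- Let p > 2 and f_ε(U) = |U|^{p-1}U/(ln(e+|U|))^ε. There exist c > 0 and ε₀ > 0 such that for all ε ∈ [0, ε₀] and all U ∈ ℝ, the second derivative satisfies |f_ε''(U)| ≤ c|U|^{p-2}. -/

import Mathlib

/-!
Write `a = |U|`, `A = e + a` and `L = log A`, so that `1 ≤ L ≤ A`, `a ≤ A` and `1 ≤ L ^ ε`.
For `ε ≤ 1` the correction `t = ε a / (A L)` lies in `[0, 1]`, hence the factors `p - 1 - t`
and `p - t` lie in `[0, p]` and the second summand is at most `p (p - 1) a ^ (p - 2)`.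
In the first summand `|a - e L| ≤ e A`, and the `A ^ 2` in the denominator absorbs this
together with the factor `|U| = a ≤ A`, leaving `e a ^ (p - 2)`.
-/

open Real

lemma one_le_log_exp_one_add {a : ℝ} (ha : 0 ≤ a) : 1 ≤ log (exp 1 + a) := by
  rw [le_log_iff_exp_le (by positivity)]
  linarith

lemma abs_sub_exp_one_mul_log_le {a : ℝ} (ha : 0 ≤ a) :
    |a - exp 1 * log (exp 1 + a)| ≤ exp 1 * (exp 1 + a) := by
  have hL := one_le_log_exp_one_add ha
  have hLA : log (exp 1 + a) ≤ exp 1 + a := log_le_self (by positivity)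
  have he : 2 ≤ exp 1 := by linarith [add_one_le_exp (1 : ℝ)]
  rw [abs_le]
  constructor <;> nlinarith

lemma abs_mul_div_rpow_log_mul_le {ε q : ℝ} (hε0 : 0 ≤ ε) (hε1 : ε ≤ 1) (U : ℝ) :
    |(ε * |U| ^ q * U / log (exp 1 + |U|) ^ ε) *
        ((|U| - exp 1 * log (exp 1 + |U|)) /
          ((exp 1 + |U|) ^ 2 * log (exp 1 + |U|) ^ 2))| ≤ exp 1 * |U| ^ q := by
  set a := |U|
  set A := exp 1 + a
  set L := log A
  have ha : 0 ≤ a := abs_nonneg U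
  have hL : 1 ≤ L := one_le_log_exp_one_add ha
  have hLε : 1 ≤ L ^ ε := one_le_rpow hL hε0
  have haA : a ≤ A := by linarith [exp_pos 1]
  have hden : A ^ 2 ≤ L ^ ε * (A ^ 2 * L ^ 2) := by
    have := one_le_mul_of_one_le_of_one_le hLε (one_le_pow₀ hL : 1 ≤ L ^ 2)
    nlinarith [sq_nonneg A]
  rw [div_mul_div_comm, abs_div, abs_mul, abs_mul, abs_mul, abs_of_nonneg hε0,
    abs_of_nonneg (by positivity : 0 ≤ a ^ q),
    abs_of_pos (by positivity : 0 < L ^ ε * (A ^ 2 * L ^ 2)), div_le_iff₀ (by positivity)]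
  calc ε * a ^ q * a * |a - exp 1 * L| ≤ 1 * a ^ q * A * (exp 1 * A) := by
        gcongr
        exact abs_sub_exp_one_mul_log_le ha
    _ = exp 1 * a ^ q * A ^ 2 := by ring
    _ ≤ exp 1 * a ^ q * (L ^ ε * (A ^ 2 * L ^ 2)) := by gcongr

lemma mul_div_mul_log_mem_Icc {ε a : ℝ} (hε0 : 0 ≤ ε) (hε1 : ε ≤ 1) (ha : 0 ≤ a) :
    ε * a / ((exp 1 + a) * log (exp 1 + a)) ∈ Set.Icc 0 1 := by
  have hL := one_le_log_exp_one_add ha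
  refine ⟨by positivity, (div_le_one (by positivity)).2 ?_⟩
  calc ε * a ≤ 1 * (exp 1 + a) := by gcongr; linarith [exp_pos 1]
    _ ≤ (exp 1 + a) * log (exp 1 + a) := by nlinarith [exp_pos 1]

lemma abs_mul_div_mul_sub_mul_sub_le {p s Λ : ℝ} (hp : 2 < p) (hs0 : 0 ≤ s) (hs1 : s ≤ 1)
    (hΛ : 1 ≤ Λ) (U : ℝ) :
    |(|U| ^ (p - 3) * U / Λ) * (p - 1 - s) * (p - s)| ≤ p * (p - 1) * |U| ^ (p - 2) := by
  have hpow : |U| ^ (p - 2) = |U| ^ (p - 3) * |U| := by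
    rw [← rpow_add_one' (abs_nonneg U) (by linarith)]
    ring_nf
  have hfirst : |U| ^ (p - 3) * |U| / Λ ≤ |U| ^ (p - 2) :=
    hpow ▸ div_le_self (by positivity) hΛ
  rw [abs_mul, abs_mul, abs_div, abs_mul, abs_of_nonneg (by positivity : 0 ≤ |U| ^ (p - 3)),
    abs_of_pos (by linarith : 0 < Λ), abs_of_nonneg (by linarith : 0 ≤ p - 1 - s),
    abs_of_nonneg (by linarith : 0 ≤ p - s)]
  calc |U| ^ (p - 3) * |U| / Λ * (p - 1 - s) * (p - s)
      ≤ |U| ^ (p - 2) * (p - 1) * p := by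
        have hpow_nonneg : 0 ≤ |U| ^ (p - 2) := by positivity
        gcongr ?_ * ?_ * ?_
        all_goals nlinarith
    _ = p * (p - 1) * |U| ^ (p - 2) := by ring

theorem stmt_6 (p : ℝ) (hp : 2 < p) :
    ∃ c > 0, ∃ ε₀ > 0, ∀ ε ∈ Set.Icc (0 : ℝ) ε₀, ∀ U : ℝ,
      |(ε * |U| ^ (p - 2) * U / (Real.log (Real.exp 1 + |U|)) ^ ε) *
          ((|U| - Real.exp 1 * Real.log (Real.exp 1 + |U|)) /
            ((Real.exp 1 + |U|) ^ 2 * (Real.log (Real.exp 1 + |U|)) ^ 2)) +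
        (|U| ^ (p - 3) * U / (Real.log (Real.exp 1 + |U|)) ^ ε) *
          (p - 1 - ε * |U| / ((Real.exp 1 + |U|) * Real.log (Real.exp 1 + |U|))) *
          (p - ε * |U| / ((Real.exp 1 + |U|) * Real.log (Real.exp 1 + |U|)))| ≤
      c * |U| ^ (p - 2) := by
  refine ⟨exp 1 + p * (p - 1), by nlinarith [exp_pos 1], 1, one_pos, ?_⟩
  rintro ε ⟨hε0, hε1⟩ U
  obtain ⟨ht0, ht1⟩ := mul_div_mul_log_mem_Icc hε0 hε1 (abs_nonneg U)
  have hLε : 1 ≤ log (exp 1 + |U|) ^ ε :=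
    one_le_rpow (one_le_log_exp_one_add (abs_nonneg U)) hε0
  calc _ ≤ _ := abs_add_le _ _
    _ ≤ exp 1 * |U| ^ (p - 2) + p * (p - 1) * |U| ^ (p - 2) :=
        add_le_add (abs_mul_div_rpow_log_mul_le hε0 hε1 U)
          (abs_mul_div_mul_sub_mul_sub_le hp ht0 ht1 hLε U)
    _ = (exp 1 + p * (p - 1)) * |U| ^ (p - 2) := by ring
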